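/- arXiv:1608.05659 — 2 statements merged into one kernel-verified Lean document; each statement's English description precedes it below -/
import Mathlib

section
/- The number of (m,2)-latin quasisquares is card(LQ(m,2)) = C(2m, m), and every element of LQ(m,2) has sign +1; consequently Pf_m(A^{2m}) = (1/2!) Σ_{c ∈ LQ(m,2)} ε(c) = (1/2) C(2m,m) = C(2m−1, m). -/
open Equiv Finset Function

/-- The `r`-th element of the `i`-th block of length `m` in `{0, …, m*n-1}`. -/
def idx (m n : ℕ) (i : Fin n) (r : Fin m) : Fin (m * n) :=
  ⟨i.val * m + r.val, by
    have h1 : i.val * m + m = (i.val + 1) * m := by ring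
    have h2 : (i.val + 1) * m ≤ n * m := Nat.mul_le_mul_right m i.isLt
    have h3 : n * m = m * n := Nat.mul_comm n m
    omega⟩

/-- A permutation of `{0, …, m*n-1}` is block-increasing if it is strictly increasing on
each of the `n` consecutive blocks of length `m`. -/
def BlockIncr (m n : ℕ) (σ : Equiv.Perm (Fin (m * n))) : Prop :=
  ∀ (i : Fin n) (r r' : Fin m), r < r' → σ (idx m n i r) < σ (idx m n i r')

instance (m n : ℕ) : DecidablePred (BlockIncr m n) := fun σ => by
  unfold BlockIncr; infer_instance

/-- The generalized pfaffian `Pf_m` of a tensor with `m*k` indices (grouped in `k` groups of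
`m`), each ranging over `{0, …, m*n-1}`:
`(1/n!) Σ ε(σ_1)⋯ε(σ_k) Π_{i=1}^n M_{σ_1((i-1)m+1),…,σ_1(im),…,σ_k((i-1)m+1),…,σ_k(im)}`,
the sum being over `k`-tuples of block-increasing permutations. -/
noncomputable def Pf (m k n : ℕ) (M : (Fin k → Fin m → Fin (m * n)) → ℚ) : ℚ :=
  (n.factorial : ℚ)⁻¹ *
    ∑ σ ∈ Finset.univ.filter (fun σ : Fin k → Equiv.Perm (Fin (m * n)) =>
        ∀ j, BlockIncr m n (σ j)),
      (∏ j, ((Equiv.Perm.sign (σ j) : ℤ) : ℚ)) *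
        ∏ i : Fin n, M (fun j r => σ j (idx m n i r))

/-- The block number of position `t` in `{0, …, m*n-1}`. -/
def blkOf (m n : ℕ) (t : Fin (m * n)) : Fin n :=
  ⟨t.val / m, Nat.div_lt_of_lt_mul t.isLt⟩

/-- The position within its block of position `t` in `{0, …, m*n-1}`. -/
def posOf (m n : ℕ) (t : Fin (m * n)) : Fin m :=
  ⟨t.val % m, by
    have hm : 0 < m := by
      rcases Nat.eq_zero_or_pos m with h | h
      · exact absurd t.isLt (by simp [h])
      · exact h
    exact Nat.mod_lt _ hm⟩

/-- The Levi-Civita (fully antisymmetric) tensor of order `m*k` and side `m*k`, with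
indices grouped in `k` groups of `m`: its value is the sign of the sequence of indices
read as a permutation when the indices are pairwise distinct, and `0` otherwise. -/
noncomputable def levi (m k : ℕ) : (Fin k → Fin m → Fin (m * k)) → ℚ := fun f =>
  if h : Function.Bijective (fun t : Fin (m * k) => f (blkOf m k t) (posOf m k t)) then
    ((Equiv.Perm.sign (Equiv.ofBijective _ h) : ℤ) : ℚ)
  else 0

/-- The hyperminor of `M` obtained by restricting the `s`-th group of `m` index slots to
the subset `I s` (of cardinality `m*ℓ`), with the induced order. -/
noncomputable def hyperminor {m k n : ℕ} (ℓ : ℕ) (M : (Fin k → Fin m → Fin (m * n)) → ℚ)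
    (I : Fin k → Finset (Fin (m * n))) (h : ∀ s, (I s).card = m * ℓ) :
    (Fin k → Fin m → Fin (m * ℓ)) → ℚ :=
  fun f => M fun j r => (((I j).orderIsoOfFin (h j)) (f j r)).1

/-- Row `ℓ` of the `(m,k)`-array built from column permutations `σ`: the entry in
column-group `j`, position `r` is `σ j ((ℓ-1)m + r)`. -/
def lqRow (m k : ℕ) (σ : Fin k → Equiv.Perm (Fin (m * k))) (ℓ : Fin k) :
    Fin (m * k) → Fin (m * k) :=
  fun t => σ (blkOf m k t) (idx m k ℓ (posOf m k t))

/-- `σ` determines an `(m,k)`-latin quasisquare: every column permutation `σ j` is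
block-increasing and every row is a permutation of `{0, …, mk-1}` (each row is then
automatically block-increasing). -/
def IsLQ (m k : ℕ) (σ : Fin k → Equiv.Perm (Fin (m * k))) : Prop :=
  (∀ j, BlockIncr m k (σ j)) ∧ ∀ ℓ : Fin k, Function.Bijective (lqRow m k σ ℓ)

instance (m k : ℕ) : DecidablePred (IsLQ m k) := fun σ => by
  unfold IsLQ lqRow; infer_instance

/-- The set of `(m,k)`-latin quasisquares. -/
noncomputable def LQ (m k : ℕ) : Finset (Fin k → Equiv.Perm (Fin (m * k))) :=
  Finset.univ.filter (IsLQ m k)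

/-- The sign of an `(m,k)`-latin quasisquare: the product of the signs of the column
permutations `σ j` and of the signs of the rows. -/
noncomputable def LQsign (m k : ℕ) (σ : Fin k → Equiv.Perm (Fin (m * k))) : ℚ :=
  if h : ∀ ℓ : Fin k, Function.Bijective (lqRow m k σ ℓ) then
    (∏ j, ((Equiv.Perm.sign (σ j) : ℤ) : ℚ)) *
      ∏ ℓ, ((Equiv.Perm.sign (Equiv.ofBijective _ (h ℓ)) : ℤ) : ℚ)
  else 0


lemma compl_card {m : ℕ} {S : Finset (Fin (m*2))} (hS : S.card = m) : Sᶜ.card = m := by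
  have := Finset.card_compl S
  simp [this, hS, Fintype.card_fin]; omega

def sigFun (m : ℕ) (S : Finset (Fin (m*2))) (hS : S.card = m) : Fin (m*2) → Fin (m*2) :=
  fun t => if h : (t:ℕ) < m then S.orderEmbOfFin hS ⟨t, h⟩
    else Sᶜ.orderEmbOfFin (compl_card hS) ⟨(t:ℕ) - m, by have := t.isLt; omega⟩

lemma sigFun_inj (m : ℕ) (S : Finset (Fin (m*2))) (hS : S.card = m) :
    Function.Injective (sigFun m S hS) := by
  intro a b hab
  unfold sigFun at hab
  split_ifs at hab with h1 h2 h2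
  · have := (S.orderEmbOfFin hS).injective hab
    exact Fin.ext (by simpa [Fin.ext_iff] using this)
  · exfalso
    have h3 := Finset.orderEmbOfFin_mem S hS ⟨a, h1⟩
    have h4 := Finset.orderEmbOfFin_mem Sᶜ (compl_card hS) ⟨(b:ℕ) - m, by have := b.isLt; omega⟩
    rw [hab] at h3
    exact (Finset.mem_compl.mp h4) h3
  · exfalso
    have h3 := Finset.orderEmbOfFin_mem S hS ⟨b, h2⟩
    have h4 := Finset.orderEmbOfFin_mem Sᶜ (compl_card hS) ⟨(a:ℕ) - m, by have := a.isLt; omega⟩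
    rw [hab] at h4
    exact (Finset.mem_compl.mp h4) h3
  · have h5 := (Sᶜ.orderEmbOfFin (compl_card hS)).injective hab
    rw [Fin.mk.injEq] at h5
    have ha := a.isLt; have hb := b.isLt
    exact Fin.ext (by omega)

noncomputable def sigPerm (m : ℕ) (S : Finset (Fin (m*2))) (hS : S.card = m) : Equiv.Perm (Fin (m*2)) :=
  Equiv.ofBijective (sigFun m S hS) (Finite.injective_iff_bijective.mp (sigFun_inj m S hS))

lemma sigPerm_apply (m : ℕ) (S : Finset (Fin (m*2))) (hS : S.card = m) (t : Fin (m*2)) :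
    sigPerm m S hS t = sigFun m S hS t := rfl

lemma idx_zero_eq (m : ℕ) (t : Fin (m*2)) (h : (t:ℕ) < m) : idx m 2 0 ⟨(t:ℕ), h⟩ = t := by
  apply Fin.ext; simp [idx]

lemma idx_one_eq (m : ℕ) (t : Fin (m*2)) (h : ¬ (t:ℕ) < m) :
    idx m 2 1 ⟨(t:ℕ) - m, by have := t.isLt; omega⟩ = t := by
  apply Fin.ext; simp [idx]; omega

lemma idx_zero_val (m : ℕ) (r : Fin m) : ((idx m 2 0 r : Fin (m*2)) : ℕ) = r := by simp [idx]

lemma idx_one_val (m : ℕ) (r : Fin m) : ((idx m 2 1 r : Fin (m*2)) : ℕ) = m + r := by simp [idx]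

lemma idx_val (m n : ℕ) (i : Fin n) (r : Fin m) : ((idx m n i r : Fin (m*n)) : ℕ) = i.val * m + r.val := rfl

lemma sigFun_lt_low (m : ℕ) (S : Finset (Fin (m*2))) (hS : S.card = m) {a b : Fin (m*2)}
    (ha : (a:ℕ) < m) (hb : (b:ℕ) < m) (hab : a < b) :
    sigFun m S hS a < sigFun m S hS b := by
  rw [sigFun, sigFun, dif_pos ha, dif_pos hb]
  exact (S.orderEmbOfFin hS).strictMono (Fin.mk_lt_mk.mpr (Fin.lt_def.mp hab))

lemma sigFun_lt_high (m : ℕ) (S : Finset (Fin (m*2))) (hS : S.card = m) {a b : Fin (m*2)}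
    (ha : ¬ (a:ℕ) < m) (hb : ¬ (b:ℕ) < m) (hab : a < b) :
    sigFun m S hS a < sigFun m S hS b := by
  rw [sigFun, sigFun, dif_neg ha, dif_neg hb]
  refine (Sᶜ.orderEmbOfFin (compl_card hS)).strictMono ?_
  rw [Fin.mk_lt_mk]
  rw [Fin.lt_def] at hab
  omega

lemma sigPerm_blockIncr (m : ℕ) (S : Finset (Fin (m*2))) (hS : S.card = m) :
    BlockIncr m 2 (sigPerm m S hS) := by
  intro i r r' hrr'
  rw [Fin.lt_def] at hrr'
  have hlt : idx m 2 i r < idx m 2 i r' := by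
    rw [Fin.lt_def, idx_val, idx_val]; omega
  have hi2 := i.isLt
  rw [sigPerm_apply, sigPerm_apply]
  by_cases hi : (i:ℕ) = 0
  · exact sigFun_lt_low m S hS (by rw [idx_val, hi]; omega)
      (by rw [idx_val, hi]; omega) hlt
  · have hi1 : (i:ℕ) = 1 := by omega
    exact sigFun_lt_high m S hS (by rw [idx_val, hi1]; omega)
      (by rw [idx_val, hi1]; omega) hlt

lemma eq_sigFun (m : ℕ) (σ : Equiv.Perm (Fin (m*2))) (hσ : BlockIncr m 2 σ)
    (S : Finset (Fin (m*2))) (hS : S.card = m)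
    (hmem : ∀ r : Fin m, σ (idx m 2 0 r) ∈ S) : ∀ t, σ t = sigFun m S hS t := by
  have hf0 : (fun r : Fin m => σ (idx m 2 0 r)) = S.orderEmbOfFin hS :=
    Finset.orderEmbOfFin_unique hS hmem (fun r r' h => hσ 0 r r' h)
  have hmem1 : ∀ r : Fin m, σ (idx m 2 1 r) ∈ Sᶜ := by
    intro r
    rw [Finset.mem_compl]
    intro hmemS
    have hrange : σ (idx m 2 1 r) ∈ Set.range (S.orderEmbOfFin hS) := by
      rw [Finset.range_orderEmbOfFin]; exact hmemS
    obtain ⟨i, hi⟩ := hrange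
    rw [← hf0] at hi
    have := σ.injective hi
    have h1 := idx_zero_val m i
    have h2 := idx_one_val m r
    rw [this] at h1
    have := i.isLt
    omega
  have hf1 : (fun r : Fin m => σ (idx m 2 1 r)) = Sᶜ.orderEmbOfFin (compl_card hS) :=
    Finset.orderEmbOfFin_unique (compl_card hS) hmem1 (fun r r' h => hσ 1 r r' h)
  intro t
  by_cases h : (t:ℕ) < m
  · rw [sigFun, dif_pos h, ← congrFun hf0 ⟨(t:ℕ), h⟩, idx_zero_eq m t h]
  · rw [sigFun, dif_neg h, ← congrFun hf1 ⟨(t:ℕ) - m, by have := t.isLt; omega⟩, idx_one_eq m t h]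


noncomputable def Phi (m : ℕ) (S : Finset (Fin (m*2))) (hS : S.card = m) :
    Fin 2 → Equiv.Perm (Fin (m*2)) :=
  fun j => if (j:ℕ) = 0 then sigPerm m S hS else sigPerm m Sᶜ (compl_card hS)

lemma Phi_zero (m : ℕ) (S : Finset (Fin (m*2))) (hS : S.card = m) :
    Phi m S hS 0 = sigPerm m S hS := if_pos rfl

lemma Phi_one (m : ℕ) (S : Finset (Fin (m*2))) (hS : S.card = m) :
    Phi m S hS 1 = sigPerm m Sᶜ (compl_card hS) := if_neg (by norm_num)

lemma blkOf_val (m n : ℕ) (t : Fin (m*n)) : ((blkOf m n t : Fin n) : ℕ) = (t:ℕ) / m := rfl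

lemma posOf_val (m n : ℕ) (t : Fin (m*n)) : ((posOf m n t : Fin m) : ℕ) = (t:ℕ) % m := rfl

lemma blkOf_idx (m : ℕ) (i : Fin 2) (r : Fin m) : blkOf m 2 (idx m 2 i r) = i := by
  have hm : 0 < m := r.pos
  apply Fin.ext
  rw [blkOf_val, idx_val, add_comm, mul_comm, Nat.add_mul_div_left _ _ hm,
    Nat.div_eq_of_lt r.isLt, Nat.zero_add]

lemma posOf_idx (m : ℕ) (i : Fin 2) (r : Fin m) : posOf m 2 (idx m 2 i r) = r := by
  apply Fin.ext
  rw [posOf_val, idx_val, mul_comm, Nat.mul_add_mod, Nat.mod_eq_of_lt r.isLt]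

lemma lqRow_Phi_zero (m : ℕ) (S : Finset (Fin (m*2))) (hS : S.card = m) :
    lqRow m 2 (Phi m S hS) 0 = ⇑(sigPerm m S hS) := by
  funext t
  have htlt := t.isLt
  rw [lqRow]
  by_cases h : (t:ℕ) < m
  · have hb : blkOf m 2 t = 0 := Fin.ext (by rw [blkOf_val, Nat.div_eq_of_lt h]; rfl)
    have harg : idx m 2 0 (posOf m 2 t) = t :=
      Fin.ext (by rw [idx_val, posOf_val, Nat.mod_eq_of_lt h]; simp)
    rw [hb, harg, Phi_zero]
  · have hb : blkOf m 2 t = 1 := by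
      apply Fin.ext
      rw [blkOf_val]
      have : (t:ℕ)/m = 1 := by
        apply Nat.div_eq_of_lt_le <;> omega
      rw [this]; rfl
    have hmod : (t:ℕ) % m = (t:ℕ) - m := by
      rw [Nat.mod_eq_sub_mod (by omega), Nat.mod_eq_of_lt (by omega)]
    rw [hb, Phi_one, sigPerm_apply, sigPerm_apply, sigFun, sigFun,
      dif_pos (show ((idx m 2 0 (posOf m 2 t)):ℕ) < m by rw [idx_val, posOf_val]; omega),
      dif_neg h]
    congr 1
    apply Fin.ext
    simp only [idx_val, posOf_val]
    omega

lemma lqRow_Phi_one (m : ℕ) (S : Finset (Fin (m*2))) (hS : S.card = m) :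
    lqRow m 2 (Phi m S hS) 1 = ⇑(sigPerm m Sᶜ (compl_card hS)) := by
  funext t
  have htlt := t.isLt
  rw [lqRow]
  by_cases h : (t:ℕ) < m
  · have hb : blkOf m 2 t = 0 := Fin.ext (by rw [blkOf_val, Nat.div_eq_of_lt h]; rfl)
    rw [hb, Phi_zero, sigPerm_apply, sigPerm_apply, sigFun, sigFun,
      dif_neg (show ¬ ((idx m 2 1 (posOf m 2 t)):ℕ) < m by rw [idx_val, posOf_val]; omega),
      dif_pos h]
    congr 1
    apply Fin.ext
    simp only [idx_val, posOf_val]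
    have hmod : (t:ℕ) % m = (t:ℕ) := Nat.mod_eq_of_lt h
    omega
  · have hb : blkOf m 2 t = 1 := by
      apply Fin.ext
      rw [blkOf_val]
      have : (t:ℕ)/m = 1 := by apply Nat.div_eq_of_lt_le <;> omega
      rw [this]; rfl
    have hmod : (t:ℕ) % m = (t:ℕ) - m := by
      rw [Nat.mod_eq_sub_mod (by omega), Nat.mod_eq_of_lt (by omega)]
    rw [hb, Phi_one, sigPerm_apply, sigPerm_apply, sigFun, sigFun,
      dif_neg (show ¬ ((idx m 2 1 (posOf m 2 t)):ℕ) < m by rw [idx_val, posOf_val]; omega),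
      dif_neg h]
    congr 1
    apply Fin.ext
    simp only [idx_val, posOf_val]
    omega


lemma fin2_cases (j : Fin 2) : j = 0 ∨ j = 1 := by omega

lemma Phi_isLQ (m : ℕ) (S : Finset (Fin (m*2))) (hS : S.card = m) : IsLQ m 2 (Phi m S hS) := by
  constructor
  · intro j
    rcases fin2_cases j with rfl | rfl
    · rw [Phi_zero]; exact sigPerm_blockIncr m S hS
    · rw [Phi_one]; exact sigPerm_blockIncr m Sᶜ (compl_card hS)
  · intro ℓ
    rcases fin2_cases ℓ with rfl | rfl
    · rw [lqRow_Phi_zero]; exact (sigPerm m S hS).bijective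
    · rw [lqRow_Phi_one]; exact (sigPerm m Sᶜ (compl_card hS)).bijective

lemma units_cast_four (u v : ℤˣ) :
    ((u:ℤ):ℚ) * ((v:ℤ):ℚ) * (((u:ℤ):ℚ) * ((v:ℤ):ℚ)) = 1 := by
  have h : ((u*v)*(u*v) : ℤˣ) = 1 := Int.units_mul_self (u*v)
  have h2 := congrArg (fun w : ℤˣ => ((w:ℤ):ℚ)) h
  push_cast at h2
  linear_combination h2

lemma LQsign_Phi (m : ℕ) (S : Finset (Fin (m*2))) (hS : S.card = m) :
    LQsign m 2 (Phi m S hS) = 1 := by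
  have hrows := (Phi_isLQ m S hS).2
  rw [LQsign, dif_pos hrows]
  have e0 : Equiv.ofBijective _ (hrows 0) = sigPerm m S hS :=
    Equiv.ext fun t => congrFun (lqRow_Phi_zero m S hS) t
  have e1 : Equiv.ofBijective _ (hrows 1) = sigPerm m Sᶜ (compl_card hS) :=
    Equiv.ext fun t => congrFun (lqRow_Phi_one m S hS) t
  rw [Fin.prod_univ_two, Fin.prod_univ_two, e0, e1, Phi_zero, Phi_one]
  exact units_cast_four _ _

lemma sigPerm_idx0 (m : ℕ) (S : Finset (Fin (m*2))) (hS : S.card = m) (r : Fin m) :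
    sigPerm m S hS (idx m 2 0 r) = S.orderEmbOfFin hS r := by
  rw [sigPerm_apply, sigFun,
    dif_pos (show ((idx m 2 0 r):ℕ) < m by rw [idx_val]; have := r.isLt; omega)]
  congr 1
  apply Fin.ext
  rw [idx_val]
  simp

lemma mem_iff_sigPerm (m : ℕ) (S : Finset (Fin (m*2))) (hS : S.card = m) (x : Fin (m*2)) :
    x ∈ S ↔ ∃ r : Fin m, sigPerm m S hS (idx m 2 0 r) = x := by
  constructor
  · intro hx
    have hx' : x ∈ Set.range (S.orderEmbOfFin hS) := by
      rw [Finset.range_orderEmbOfFin]; exact hx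
    obtain ⟨r, hr⟩ := hx'
    exact ⟨r, by rw [sigPerm_idx0]; exact hr⟩
  · rintro ⟨r, rfl⟩
    rw [sigPerm_idx0]
    exact Finset.orderEmbOfFin_mem S hS r

lemma Phi_inj (m : ℕ) (S S' : Finset (Fin (m*2))) (hS : S.card = m) (hS' : S'.card = m)
    (h : Phi m S hS = Phi m S' hS') : S = S' := by
  have h0 : sigPerm m S hS = sigPerm m S' hS' := by
    rw [← Phi_zero m S hS, ← Phi_zero m S' hS', h]
  ext x
  rw [mem_iff_sigPerm m S hS, mem_iff_sigPerm m S' hS', h0]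

lemma Phi_surj (m : ℕ) (σ : Fin 2 → Equiv.Perm (Fin (m*2))) (hσ : IsLQ m 2 σ) :
    ∃ (S : Finset (Fin (m*2))) (hS : S.card = m), Phi m S hS = σ := by
  obtain ⟨hBI, hrows⟩ := hσ
  set f : Fin m → Fin (m*2) := fun r => σ 0 (idx m 2 0 r) with hf
  have hfmono : StrictMono f := fun r r' h => hBI 0 0 r r' h
  set S : Finset (Fin (m*2)) := Finset.image f Finset.univ with hSdef
  have hS : S.card = m := by
    rw [hSdef, Finset.card_image_of_injective _ hfmono.injective, Finset.card_univ,
      Fintype.card_fin]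
  have hσ0 : σ 0 = sigPerm m S hS :=
    Equiv.ext (eq_sigFun m (σ 0) (hBI 0) S hS
      (fun r => Finset.mem_image_of_mem _ (Finset.mem_univ r)))
  have hmem1 : ∀ r : Fin m, σ 1 (idx m 2 0 r) ∈ Sᶜ := by
    intro r
    rw [Finset.mem_compl]
    intro hx
    rw [hSdef, Finset.mem_image] at hx
    obtain ⟨r', -, hr'⟩ := hx
    have hrow : lqRow m 2 σ 0 (idx m 2 0 r') = lqRow m 2 σ 0 (idx m 2 1 r) := by
      simp only [lqRow, blkOf_idx, posOf_idx]
      exact hr'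
    have := (hrows 0).1 hrow
    have h1 := idx_val m 2 0 r'
    have h2 := idx_val m 2 1 r
    rw [this] at h1
    have := r'.isLt
    omega
  have hσ1 : σ 1 = sigPerm m Sᶜ (compl_card hS) :=
    Equiv.ext (eq_sigFun m (σ 1) (hBI 1) Sᶜ (compl_card hS) hmem1)
  refine ⟨S, hS, funext fun j => ?_⟩
  rcases fin2_cases j with rfl | rfl
  · rw [Phi_zero, hσ0]
  · rw [Phi_one, hσ1]
/-- For `k = 2`: there are exactly `C(2m, m)` latin quasisquares, all of sign `+1`, and
consequently `Pf_m(A^{2m}) = (1/2) C(2m, m) = C(2m-1, m)`. -/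
theorem lq_two_card_sign_pf (m : ℕ) (hm : 0 < m) :
    (LQ m 2).card = Nat.choose (2 * m) m ∧
    (∀ σ ∈ LQ m 2, LQsign m 2 σ = 1) ∧
    Pf m 2 2 (levi m 2) = Nat.choose (2 * m - 1) m := by
  have hcard : (LQ m 2).card = Nat.choose (2 * m) m := by
    have hbij : (Finset.univ.powersetCard m : Finset (Finset (Fin (m*2)))).card
        = (LQ m 2).card := by
      apply Finset.card_bij (fun S hS => Phi m S (Finset.mem_powersetCard_univ.mp hS))
      · intro S hS
        rw [LQ, Finset.mem_filter]
        exact ⟨Finset.mem_univ _, Phi_isLQ m S _⟩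
      · intro S hS S' hS' h
        exact Phi_inj m S S' _ _ h
      · intro σ hσ
        have hIs : IsLQ m 2 σ := (Finset.mem_filter.mp hσ).2
        obtain ⟨S, hS, hPhi⟩ := Phi_surj m σ hIs
        exact ⟨S, Finset.mem_powersetCard_univ.mpr hS, by rw [hPhi]⟩
    rw [← hbij, Finset.card_powersetCard, Finset.card_univ, Fintype.card_fin, Nat.mul_comm]
  have hsign : ∀ σ ∈ LQ m 2, LQsign m 2 σ = 1 := by
    intro σ hσ
    obtain ⟨S, hS, rfl⟩ := Phi_surj m σ (Finset.mem_filter.mp hσ).2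
    exact LQsign_Phi m S hS
  refine ⟨hcard, hsign, ?_⟩
  have hid : Nat.choose (2 * m) m = 2 * Nat.choose (2 * m - 1) m := by
    obtain ⟨n, rfl⟩ : ∃ n, m = n + 1 := ⟨m - 1, by omega⟩
    have h1 : (2*n+1).choose n = (2*n+1).choose (n+1) := by
      have h := Nat.choose_symm (show n + 1 ≤ 2*n+1 by omega)
      rw [show 2*n+1-(n+1) = n by omega] at h
      exact h
    have h2 := Nat.choose_succ_succ (2*n+1) n
    simp only [Nat.succ_eq_add_one] at h2
    rw [show 2 * (n + 1) = (2*n+1) + 1 by ring, show (2*n+1) + 1 - 1 = 2*n+1 by omega]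
    omega
  rw [Pf]
  have hsub : LQ m 2 ⊆ Finset.univ.filter
      (fun σ : Fin 2 → Equiv.Perm (Fin (m*2)) => ∀ j, BlockIncr m 2 (σ j)) := by
    intro σ hσ
    rw [LQ, Finset.mem_filter] at hσ
    exact Finset.mem_filter.mpr ⟨hσ.1, hσ.2.1⟩
  rw [← Finset.sum_subset hsub ?_]
  · have hterm : ∀ σ ∈ LQ m 2,
        (∏ j, ((Equiv.Perm.sign (σ j) : ℤ) : ℚ)) *
          ∏ i : Fin 2, levi m 2 (fun j r => σ j (idx m 2 i r)) = LQsign m 2 σ := by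
      intro σ hσ
      have hrows := ((Finset.mem_filter.mp hσ).2).2
      rw [LQsign, dif_pos hrows]
      congr 1
      apply Finset.prod_congr rfl
      intro i _
      simp only [levi]
      exact dif_pos (hrows i)
    rw [Finset.sum_congr rfl hterm, Finset.sum_congr rfl hsign, Finset.sum_const, hcard,
      nsmul_eq_mul, mul_one, hid]
    rw [show (Nat.factorial 2 : ℚ) = 2 by norm_num [Nat.factorial]]
    push_cast
    ring
  · intro σ hσ hσLQ
    have hBI := (Finset.mem_filter.mp hσ).2
    have hnrows : ¬ ∀ ℓ : Fin 2, Function.Bijective (lqRow m 2 σ ℓ) := by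
      intro hc
      exact hσLQ (Finset.mem_filter.mpr ⟨Finset.mem_univ _, hBI, hc⟩)
    push_neg at hnrows
    obtain ⟨ℓ, hℓ⟩ := hnrows
    have hzero : levi m 2 (fun j r => σ j (idx m 2 ℓ r)) = 0 := by
      simp only [levi]
      exact dif_neg hℓ
    exact mul_eq_zero_of_right _ (Finset.prod_eq_zero (Finset.mem_univ ℓ) hzero)
end

section
/- Berezin integral representation: for a tensor M with mk indices over {1,...,mn} (mk even), the n-th power of the Grassmann element Ω_m(M) satisfies (1/n!) ∫ dη^(1)_{1..mn} ··· dη^(k)_{1..mn} Ω_m(M)^n = Pf_m(M), where Ω_m(M) = Σ M_{i_1...i_{mk}} η^(1)_{i_1}···η^(1)_{i_m} ··· η^(k)_{i_{(k-1)m+1}}···η^(k)_{i_{km}}, summed over block-increasing index tuples. -/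
open Equiv Finset Function

/-- Lexicographic comparison of Grassmann generators `η^(j)_i ↔ (j, i)`: family-major. -/
def GenLt {a b : ℕ} (p q : Fin a × Fin b) : Prop :=
  p.1 < q.1 ∨ (p.1 = q.1 ∧ p.2 < q.2)

instance {a b : ℕ} (p q : Fin a × Fin b) : Decidable (GenLt p q) := by
  unfold GenLt; infer_instance

/-- The sign produced when merging the ordered Grassmann monomial over `A` with the one
over `B` (for `A`, `B` disjoint): `(-1)` to the number of inversions. -/
def gsign {a b : ℕ} (A B : Finset (Fin a × Fin b)) : ℚ :=
  (-1 : ℚ) ^ ((A ×ˢ B).filter (fun pq => GenLt pq.2 pq.1)).card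

/-- Multiplication in the Grassmann algebra with generators indexed by `Fin a × Fin b`,
elements being represented by their coordinates on the basis of ordered monomials
indexed by `Finset (Fin a × Fin b)`. -/
def gmul {a b : ℕ} (x y : Finset (Fin a × Fin b) → ℚ) : Finset (Fin a × Fin b) → ℚ :=
  fun S => ∑ A ∈ S.powerset, gsign A (S \ A) * x A * y (S \ A)

/-- Powers in the Grassmann algebra. -/
def gpow {a b : ℕ} (x : Finset (Fin a × Fin b) → ℚ) : ℕ → Finset (Fin a × Fin b) → ℚ
  | 0 => fun S => if S = ∅ then 1 else 0
  | ℓ + 1 => gmul x (gpow x ℓ)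

/-- The Grassmann element `Ω_m(M) = Σ M_{i_1…i_{mk}} η^(1)_{i_1}⋯η^(1)_{i_m} ⋯
η^(k)_{i_{(k-1)m+1}}⋯η^(k)_{i_{km}}`, summed over block-increasing index tuples;
generator `η^(j)_i` is `(j, i)`. -/
def Omega (m k n : ℕ) (M : (Fin k → Fin m → Fin (m * n)) → ℚ) :
    Finset (Fin k × Fin (m * n)) → ℚ := fun S =>
  ∑ f ∈ Finset.univ.filter (fun f : Fin k → Fin m → Fin (m * n) => ∀ j, StrictMono (f j)),
    if S = Finset.image (fun p : Fin k × Fin m => (p.1, f p.1 p.2)) Finset.univ then M f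
    else 0

/-!
Expanding `Ω^ℓ` multilinearly, the coefficient of a monomial `S` is a sum over sequences of `ℓ`
disjoint monomials of `Ω` whose union is `S`, weighted by the sign of merging them into the
ordered monomial of `S`. For `S` the set of all generators, such a sequence of `n` monomials is
the same thing as a `k`-tuple of block-increasing permutations `σ_j` (the `i`-th monomial
applies `σ_j` to the `i`-th block of `m` indices), and its merging sign factors over the
families: passing a generator of one family across a monomial of another costs `m²`
transpositions, an even number, while within family `j` the sign counts the inversions of `σ_j`
between different blocks, which are all its inversions since `σ_j` is increasing on blocks.
-/

section DisjointCover

variable {α : Type*} [DecidableEq α]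

def IsDisjointCover {ℓ : ℕ} (A : Fin ℓ → Finset α) (S : Finset α) : Prop :=
  Pairwise (Disjoint on A) ∧ univ.biUnion A = S

instance {ℓ : ℕ} (A : Fin ℓ → Finset α) (S : Finset α) : Decidable (IsDisjointCover A S) := by
  unfold IsDisjointCover Pairwise; infer_instance

lemma pairwise_disjoint_cons {ℓ : ℕ} (B : Finset α) (A : Fin ℓ → Finset α) :
    Pairwise (Disjoint on (Fin.cons B A : Fin (ℓ + 1) → Finset α)) ↔
      Disjoint B (univ.biUnion A) ∧ Pairwise (Disjoint on A) := by
  simp only [disjoint_biUnion_right, mem_univ, true_imp_iff]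
  constructor
  · intro h
    refine ⟨fun i => by simpa [onFun] using h (Fin.succ_ne_zero i).symm, fun i j hij => ?_⟩
    simpa [onFun] using h ((Fin.succ_injective _).ne hij)
  · rintro ⟨hB, hA⟩ i j hij
    cases i using Fin.cases <;> cases j using Fin.cases
    · exact absurd rfl hij
    · simpa [onFun] using hB _
    · simpa [onFun] using (hB _).symm
    · simpa [onFun] using hA (fun h => hij (congrArg Fin.succ h))

lemma isDisjointCover_cons_iff {ℓ : ℕ} (B : Finset α) (A : Fin ℓ → Finset α) (S : Finset α) :
    IsDisjointCover (Fin.cons B A : Fin (ℓ + 1) → Finset α) S ↔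
      B ⊆ S ∧ IsDisjointCover A (S \ B) := by
  have hunion : univ.biUnion (Fin.cons B A : Fin (ℓ + 1) → Finset α) = B ∪ univ.biUnion A := by
    ext; simp [Fin.exists_fin_succ]
  simp only [IsDisjointCover, pairwise_disjoint_cons, hunion]
  constructor
  · rintro ⟨⟨hB, hA⟩, rfl⟩
    exact ⟨subset_union_left, hA, (union_sdiff_cancel_left hB).symm⟩
  · rintro ⟨hBS, hA, hcov⟩
    exact ⟨⟨hcov ▸ disjoint_sdiff, hA⟩, by rw [hcov, union_sdiff_of_subset hBS]⟩

end DisjointCover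

section Grassmann

variable {a b : ℕ}

lemma gsign_eq_prod (A B : Finset (Fin a × Fin b)) :
    gsign A B = ∏ p ∈ A, ∏ q ∈ B, if GenLt q p then -1 else 1 := by
  rw [← prod_product', gsign, prod_ite, prod_const, prod_const_one, mul_one]

lemma gsign_biUnion {ι : Type*} [DecidableEq ι] (A : Finset (Fin a × Fin b)) {s : Finset ι}
    {t : ι → Finset (Fin a × Fin b)} (h : (s : Set ι).PairwiseDisjoint t) :
    gsign A (s.biUnion t) = ∏ i ∈ s, gsign A (t i) := by
  simp only [gsign_eq_prod, prod_biUnion h]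
  exact prod_comm

lemma gsign_of_isDisjointCover {ℓ : ℕ} (B : Finset (Fin a × Fin b))
    {A : Fin ℓ → Finset (Fin a × Fin b)} {S : Finset (Fin a × Fin b)}
    (hA : IsDisjointCover A S) : gsign B S = ∏ i, gsign B (A i) := by
  rw [← hA.2]
  exact gsign_biUnion B fun i _ j _ hij => hA.1 hij

/-- For pairwise disjoint `A`, the product of the ordered monomials `A 0, …, A (ℓ - 1)` is
`mergeSign A` times the ordered monomial of their union. -/
def mergeSign {ℓ : ℕ} (A : Fin ℓ → Finset (Fin a × Fin b)) : ℚ :=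
  ∏ i, ∏ j, if i < j then gsign (A i) (A j) else 1

lemma mergeSign_cons {ℓ : ℕ} (B : Finset (Fin a × Fin b)) (A : Fin ℓ → Finset (Fin a × Fin b)) :
    mergeSign (Fin.cons B A : Fin (ℓ + 1) → _) = (∏ i, gsign B (A i)) * mergeSign A := by
  simp [mergeSign, Fin.prod_univ_succ, Fin.succ_pos]

theorem gpow_apply (x : Finset (Fin a × Fin b) → ℚ) (ℓ : ℕ) (S : Finset (Fin a × Fin b)) :
    gpow x ℓ S = ∑ A : Fin ℓ → Finset (Fin a × Fin b),
      if IsDisjointCover A S then mergeSign A * ∏ i, x (A i) else 0 := by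
  induction ℓ generalizing S with
  | zero =>
    simp [gpow, IsDisjointCover, mergeSign, eq_comm, Subsingleton.pairwise]
  | succ ℓ ih =>
    simp only [gpow, gmul, ih, mul_sum]
    rw [← (Fin.consEquiv fun _ => Finset (Fin a × Fin b)).sum_comp, Fintype.sum_prod_type,
      ← Fintype.sum_ite_mem]
    simp only [mem_powerset, Fin.consEquiv, Equiv.coe_fn_mk]
    refine sum_congr rfl fun B _ => ?_
    split_ifs with hBS
    · refine sum_congr rfl fun A _ => ?_
      simp only [isDisjointCover_cons_iff, hBS, true_and, mergeSign_cons,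
        Fin.prod_univ_succ, Fin.cons_zero, Fin.cons_succ]
      split_ifs with hA
      · rw [gsign_of_isDisjointCover B hA]; ring
      · simp
    · refine (sum_eq_zero fun A _ => ?_).symm
      simp [isDisjointCover_cons_iff, hBS]

theorem gpow_sum_apply {β : Type*} (s : Finset β) (T : β → Finset (Fin a × Fin b))
    (c : β → ℚ) (ℓ : ℕ) (S : Finset (Fin a × Fin b)) :
    gpow (fun A => ∑ f ∈ s, if A = T f then c f else 0) ℓ S =
      ∑ F ∈ Fintype.piFinset fun _ : Fin ℓ => s,
        if IsDisjointCover (T ∘ F) S then mergeSign (T ∘ F) * ∏ i, c (F i) else 0 := by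
  have hprod : ∀ A : Fin ℓ → Finset (Fin a × Fin b),
      ∏ i, (∑ f ∈ s, if A i = T f then c f else 0) =
        ∑ F ∈ Fintype.piFinset fun _ => s, if A = T ∘ F then ∏ i, c (F i) else 0 := by
    intro A
    rw [prod_univ_sum]
    refine sum_congr rfl fun F _ => ?_
    simp only [prod_ite_zero, mem_univ, true_imp_iff, funext_iff, comp_apply]
  rw [gpow_apply]
  calc _ = ∑ A : Fin ℓ → Finset (Fin a × Fin b), ∑ F ∈ Fintype.piFinset fun _ => s,
        if A = T ∘ F then
          (if IsDisjointCover A S then mergeSign A * ∏ i, c (F i) else 0) else 0 := by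
        refine sum_congr rfl fun A _ => ?_
        rw [hprod, mul_sum]
        split_ifs <;> simp_all
    _ = _ := by
        rw [sum_comm]
        exact sum_congr rfl fun F _ => Fintype.sum_ite_eq' _ _

end Grassmann

section Tuples

variable {k m N : ℕ}

def tupleSupport (f : Fin k → Fin m → Fin N) : Finset (Fin k × Fin N) :=
  univ.image fun p : Fin k × Fin m => (p.1, f p.1 p.2)

@[simp]
lemma mem_tupleSupport (f : Fin k → Fin m → Fin N) (j : Fin k) (v : Fin N) :
    (j, v) ∈ tupleSupport f ↔ ∃ r, f j r = v := by
  simp [tupleSupport]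

lemma omega_eq_sum (m k n : ℕ) (M : (Fin k → Fin m → Fin (m * n)) → ℚ) :
    Omega m k n M = fun S => ∑ f ∈ univ.filter (fun f : Fin k → Fin m → Fin (m * n) =>
      ∀ j, StrictMono (f j)), if S = tupleSupport f then M f else 0 :=
  rfl

lemma prod_tupleSupport (f : Fin k → Fin m → Fin N) (hf : ∀ j, Injective (f j))
    (g : Fin k × Fin N → ℚ) : ∏ p ∈ tupleSupport f, g p = ∏ j, ∏ r, g (j, f j r) := by
  rw [tupleSupport, prod_image, Fintype.prod_prod_type]
  rintro ⟨j, r⟩ - ⟨j', r'⟩ - h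
  simp only [Prod.mk.injEq] at h
  obtain ⟨rfl, h⟩ := h
  rw [hf j h]

lemma gsign_tupleSupport (hm : Even m) (f g : Fin k → Fin m → Fin N)
    (hf : ∀ j, Injective (f j)) (hg : ∀ j, Injective (g j)) :
    gsign (tupleSupport f) (tupleSupport g) =
      ∏ j, ∏ r, ∏ r', if g j r' < f j r then -1 else 1 := by
  rw [gsign_eq_prod, prod_tupleSupport f hf]
  simp_rw [prod_tupleSupport g hg]
  refine prod_congr rfl fun j _ => ?_
  rw [prod_comm, prod_eq_single j]
  · simp [GenLt]
  · -- a pair of distinct families contributes `m²` equal signs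
    intro j' _ hj'
    simp [GenLt, hj', hm.neg_one_pow]
  · simp

end Tuples

section Blocks

variable {m n k : ℕ}

def blockEquiv (m n : ℕ) : Fin n × Fin m ≃ Fin (m * n) :=
  finProdFinEquiv.trans (finCongr (Nat.mul_comm n m))

lemma blockEquiv_apply (p : Fin n × Fin m) : blockEquiv m n p = idx m n p.1 p.2 :=
  Fin.ext (by simp [blockEquiv, idx, Nat.add_comm, Nat.mul_comm])

lemma blockEquiv_symm_idx (i : Fin n) (r : Fin m) : (blockEquiv m n).symm (idx m n i r) = (i, r) :=
  (Equiv.symm_apply_eq _).2 (blockEquiv_apply (i, r)).symm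

lemma idx_injective (i : Fin n) : Injective (idx m n i) := fun r r' h => by
  simpa using (blockEquiv m n).injective
    ((blockEquiv_apply (i, r)).trans (h.trans (blockEquiv_apply (i, r')).symm))

lemma idx_lt_idx_iff {i i' : Fin n} {r r' : Fin m} :
    idx m n i r < idx m n i' r' ↔ i < i' ∨ i = i' ∧ r < r' := by
  have block_lt : ∀ {i i' : Fin n} (r r' : Fin m), i < i' → idx m n i r < idx m n i' r' := by
    intro i i' r r' h
    have : (i.val + 1) * m ≤ i'.val * m := Nat.mul_le_mul_right m h
    simp only [Fin.lt_def, idx, Nat.add_mul, Nat.one_mul] at this ⊢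
    omega
  rcases lt_trichotomy i i' with h | rfl | h
  · simp [h, block_lt r r' h]
  · simp only [lt_irrefl, false_or, true_and, Fin.lt_def, idx]
    omega
  · simp [h.not_gt, h.ne', (block_lt r' r h).not_gt]

theorem sign_eq_prod_of_blockIncr (τ : Perm (Fin (m * n))) (hτ : BlockIncr m n τ) :
    ((Perm.sign τ : ℤ) : ℚ) = ∏ i, ∏ i', if i < i' then
      ∏ r, ∏ r', (if τ (idx m n i' r') < τ (idx m n i r) then -1 else 1) else 1 := by
  have hpair : ∀ i r i' r', (if idx m n i r < idx m n i' r' then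
        (if τ (idx m n i r) < τ (idx m n i' r') then 1 else -1) else 1 : ℚ) =
      if i < i' then (if τ (idx m n i' r') < τ (idx m n i r) then -1 else 1) else 1 := by
    intro i r i' r'
    simp only [idx_lt_idx_iff]
    rcases lt_trichotomy i i' with h | rfl | h
    · have hne : τ (idx m n i r) ≠ τ (idx m n i' r') :=
        τ.injective.ne (idx_lt_idx_iff.2 (Or.inl h)).ne
      rcases hne.lt_or_gt with h' | h' <;> simp [h, h', h'.not_gt]
    · by_cases hr : r < r' <;> simp [hr, hτ i r r']
    · simp [h.not_gt, h.ne']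
  rw [Perm.sign_eq_prod_prod_Ioi, ← (blockEquiv m n).prod_comp]
  push_cast [apply_ite]
  simp only [← filter_lt_eq_Ioi, prod_filter]
  refine (prod_congr rfl fun p _ => ((blockEquiv m n).prod_comp _).symm).trans ?_
  simp only [blockEquiv_apply, Fintype.prod_prod_type, hpair]
  refine prod_congr rfl fun i _ => ?_
  rw [prod_comm]
  simp only [prod_ite_irrel, prod_const_one]

def blocks (σ : Fin k → Perm (Fin (m * n))) : Fin n → Fin k → Fin m → Fin (m * n) :=
  fun i j r => σ j (idx m n i r)

lemma blocks_injective (σ : Fin k → Perm (Fin (m * n))) (i : Fin n) (j : Fin k) :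
    Injective (blocks σ i j) :=
  (σ j).injective.comp (idx_injective i)

theorem mergeSign_blocks (hm : Even m) (σ : Fin k → Perm (Fin (m * n)))
    (hσ : ∀ j, BlockIncr m n (σ j)) :
    mergeSign (tupleSupport ∘ blocks σ) = ∏ j, ((Perm.sign (σ j) : ℤ) : ℚ) := by
  simp only [mergeSign, comp_apply,
    gsign_tupleSupport hm _ _ (blocks_injective σ _) (blocks_injective σ _),
    sign_eq_prod_of_blockIncr _ (hσ _)]
  symm
  rw [prod_comm]
  refine prod_congr rfl fun i _ => ?_
  rw [prod_comm]
  simp only [prod_ite_irrel, prod_const_one, blocks]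
  rfl

theorem isDisjointCover_tupleSupport_iff (F : Fin n → Fin k → Fin m → Fin (m * n)) :
    IsDisjointCover (tupleSupport ∘ F) univ ↔
      ∀ j, Bijective fun p : Fin n × Fin m => F p.1 j p.2 := by
  constructor
  · rintro ⟨-, hcov⟩ j
    refine (Fintype.bijective_iff_surjective_and_card _).2 ⟨fun v => ?_, by simp [Nat.mul_comm]⟩
    obtain ⟨i, -, hi⟩ := mem_biUnion.1 (hcov ▸ mem_univ (j, v))
    obtain ⟨r, hr⟩ := (mem_tupleSupport _ _ _).1 hi
    exact ⟨(i, r), hr⟩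
  · intro hbij
    refine ⟨fun i i' hii' => disjoint_left.2 ?_, eq_univ_iff_forall.2 fun ⟨j, v⟩ => ?_⟩
    · rintro ⟨j, v⟩ hv hv'
      obtain ⟨r, rfl⟩ := (mem_tupleSupport _ _ _).1 hv
      obtain ⟨r', hr'⟩ := (mem_tupleSupport _ _ _).1 hv'
      exact hii' (congrArg Prod.fst (@(hbij j).1 (i', r') (i, r) hr')).symm
    · obtain ⟨⟨i, r⟩, hr⟩ := (hbij j).2 v
      exact mem_biUnion.2 ⟨i, mem_univ _, (mem_tupleSupport _ _ _).2 ⟨r, hr⟩⟩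

theorem bijOn_blocks :
    Set.BijOn (blocks (m := m) (n := n) (k := k)) {σ | ∀ j, BlockIncr m n (σ j)}
      {F | (∀ i j, StrictMono (F i j)) ∧ IsDisjointCover (tupleSupport ∘ F) univ} := by
  refine ⟨fun σ hσ => ⟨fun i j r r' h => hσ j i r r' h, ?_⟩, fun σ _ σ' _ h => ?_,
    fun F ⟨hF, hcov⟩ => ?_⟩
  · rw [isDisjointCover_tupleSupport_iff]
    intro j
    simpa [blocks, comp_def, blockEquiv_apply] using
      (σ j).bijective.comp (blockEquiv m n).bijective
  · funext j
    refine Equiv.ext fun t => ?_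
    obtain ⟨⟨i, r⟩, rfl⟩ := (blockEquiv m n).surjective t
    simpa [blocks, blockEquiv_apply] using congrFun (congrFun (congrFun h i) j) r
  · have hbij := (isDisjointCover_tupleSupport_iff F).1 hcov
    refine ⟨fun j => (blockEquiv m n).symm.trans (Equiv.ofBijective _ (hbij j)), ?_, ?_⟩
    · intro j i r r' h
      simpa [blocks, blockEquiv_symm_idx] using hF i j h
    · funext i j r
      simp [blocks, blockEquiv_symm_idx]

end Blocks

/-- Berezin integral representation of the generalized pfaffian: extracting the
coefficient of the top Grassmann monomial (the Berezin integral over all variables of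
all `k` families) in `Ω_m(M)^n / n!` yields `Pf_m(M)` (assume `m` even so that the `k`
families of Grassmann variables mutually commute). -/
theorem berezin_top_eq_pf (m k n : ℕ) (hm : Even m)
    (M : (Fin k → Fin m → Fin (m * n)) → ℚ) :
    (n.factorial : ℚ)⁻¹ * gpow (Omega m k n M) n Finset.univ = Pf m k n M := by
  rw [omega_eq_sum, gpow_sum_apply (T := tupleSupport), ← sum_filter, Pf]
  congr 1
  refine (sum_nbij blocks (fun σ hσ => ?_) (fun σ hσ σ' hσ' => ?_) (fun F hF => ?_)
    fun σ hσ => ?_).symm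
  · simpa [Fintype.mem_piFinset] using bijOn_blocks.mapsTo (by simpa using hσ)
  · exact bijOn_blocks.injOn (by simpa using hσ) (by simpa using hσ')
  · obtain ⟨σ, hσ, rfl⟩ := bijOn_blocks.surjOn (by simpa [Fintype.mem_piFinset] using hF)
    exact ⟨σ, by simpa using hσ, rfl⟩
  · rw [mergeSign_blocks hm σ (by simpa using hσ)]
    rfl
end
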